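/- Let X be a compact metric space, T : X → X a surjective continuous map, and f ∈ C(X,ℝ). Then for each finite open cover 𝒰 of X, each compact subset K of X, and all n, m ∈ ℕ, P_n(T,f∘T^m,T^{-m}𝒰,T^{-m}K) = P_n(T,f,𝒰,K), where T^{-m}𝒰 = { T^{-m}U : U ∈ 𝒰 }. -/

import Mathlib

open Filter Set Topology MeasureTheory

noncomputable section

variable {X : Type*}

/-- Birkhoff sum `f_n(x) = ∑_{j<n} f(T^j x)`. -/
def birk (T : X → X) (f : X → ℝ) (n : ℕ) (x : X) : ℝ :=
  ∑ j ∈ Finset.range n, f (T^[j] x)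

/-- `P_n(T,f,δ,K)`: supremum of `∑_{x∈E} exp f_n(x)` over `(n,δ)`-separated
subsets `E ⊆ K`. -/
def sepPn [MetricSpace X] (T : X → X) (f : X → ℝ) (n : ℕ) (δ : ℝ) (K : Set X) : ℝ :=
  sSup { r : ℝ | ∃ E : Finset X, ↑E ⊆ K ∧
    (∀ x ∈ E, ∀ y ∈ E, x ≠ y → ∃ i < n, δ < dist (T^[i] x) (T^[i] y)) ∧
    r = ∑ x ∈ E, Real.exp (birk T f n x) }

/-- The topological pressure of `T` for the subset `K`:
`P(T,f,K) = lim_{δ→0} limsup_n (1/n) log P_n(T,f,δ,K)`; since the expression is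
nonincreasing in `δ`, the limit is the supremum over `δ > 0`. -/
def pres [MetricSpace X] (T : X → X) (f : X → ℝ) (K : Set X) : EReal :=
  ⨆ (δ : ℝ) (_ : 0 < δ), atTop.limsup fun n : ℕ =>
    ((Real.log (sepPn T f n δ K) / n : ℝ) : EReal)

/-- The `ε`-stable set `W^s_ε(x,T)`. -/
def epsStable [MetricSpace X] (T : X → X) (ε : ℝ) (x : X) : Set X :=
  { y | ∀ n : ℕ, dist (T^[n] x) (T^[n] y) ≤ ε }

/-- The topological pressure of the preimages of the `ε`-stable set of `x`:
`P_s(T,f,x,ε) = lim_{δ→0} limsup_n (1/n) log P_n(T,f,δ,T^{-n}W^s_ε(x,T))`. -/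
def Ps [MetricSpace X] (T : X → X) (f : X → ℝ) (x : X) (ε : ℝ) : EReal :=
  ⨆ (δ : ℝ) (_ : 0 < δ), atTop.limsup fun n : ℕ =>
    ((Real.log (sepPn T f n δ ((T^[n]) ⁻¹' epsStable T ε x)) / n : ℝ) : EReal)

/-- A finite open cover of `X`. -/
def IsOpenCover [TopologicalSpace X] (𝒰 : Finset (Set X)) : Prop :=
  (∀ U ∈ 𝒰, IsOpen U) ∧ ⋃₀ (𝒰 : Set (Set X)) = univ

/-- A finite Borel cover of `X`. -/
def IsBorelCover [MeasurableSpace X] (𝒱 : Finset (Set X)) : Prop :=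
  (∀ V ∈ 𝒱, MeasurableSet V) ∧ ⋃₀ (𝒱 : Set (Set X)) = univ

/-- `𝒱` refines the iterated cover `𝒰_0^{n-1} = ⋁_{i<n} T^{-i}𝒰`. -/
def RefinesIter (T : X → X) (𝒰 : Finset (Set X)) (n : ℕ) (𝒱 : Finset (Set X)) : Prop :=
  ∀ V ∈ 𝒱, ∃ g : Fin n → Set X, (∀ i, g i ∈ 𝒰) ∧ V ⊆ ⋂ i : Fin n, (T^[(i : ℕ)]) ⁻¹' g i

/-- `P_n(T,f,𝒰,K)`: infimum over finite Borel covers `𝒱` refining `𝒰_0^{n-1}` of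
`∑_{V∈𝒱} sup_{x ∈ V∩K} exp f_n(x)` (an empty summand contributes `0`, which is
`Real.sSup ∅`). -/
def covPn [MeasurableSpace X] (T : X → X) (f : X → ℝ) (𝒰 : Finset (Set X)) (n : ℕ)
    (K : Set X) : ℝ :=
  sInf { r : ℝ | ∃ 𝒱 : Finset (Set X), IsBorelCover 𝒱 ∧ RefinesIter T 𝒰 n 𝒱 ∧
    r = ∑ V ∈ 𝒱, sSup ((fun x => Real.exp (birk T f n x)) '' (V ∩ K)) }

/-- A finite Borel partition of `X`. -/
def IsFinPartition [MeasurableSpace X] (α : Finset (Set X)) : Prop :=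
  (∀ A ∈ α, MeasurableSet A) ∧ ⋃₀ (α : Set (Set X)) = univ ∧
    (α : Set (Set X)).Pairwise Disjoint

/-- `H_μ(⋁_{i<n} T^{-i}α)`, computed over all atoms `⋂_{i<n} T^{-i} A_i`. -/
def dynH [MeasurableSpace X] (μ : Measure X) (T : X → X) (α : Finset (Set X)) (n : ℕ) : ℝ :=
  ∑ g : Fin n → α, Real.negMulLog ((μ (⋂ i : Fin n, (T^[(i : ℕ)]) ⁻¹' (g i : Set X))).toReal)

/-- `h_μ(T,α) = lim_n (1/n) H_μ(α_0^{n-1})`, which for an invariant measure equals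
the infimum of `(1/n) H_μ(α_0^{n-1})` over `n ≥ 1`. -/
def entPart [MeasurableSpace X] (μ : Measure X) (T : X → X) (α : Finset (Set X)) : ℝ :=
  ⨅ n : ℕ, dynH μ T α (n + 1) / (n + 1 : ℝ)

/-- The measure-theoretic entropy `h_μ(T)`. -/
def mEnt [MeasurableSpace X] (μ : Measure X) (T : X → X) : EReal :=
  ⨆ (α : Finset (Set X)) (_ : IsFinPartition α), ((entPart μ T α : ℝ) : EReal)

/-- The measure-theoretic pressure `P_μ(T,f) = h_μ(T) + ∫ f dμ`. -/
def mPres [MeasurableSpace X] (μ : Measure X) (T : X → X) (f : X → ℝ) : EReal :=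
  mEnt μ T + ((∫ x, f x ∂μ : ℝ) : EReal)

/-- The stable set `W^s(x,T)`. -/
def stableSet [MetricSpace X] (T : X → X) (x : X) : Set X :=
  { y | Tendsto (fun n : ℕ => dist (T^[n] x) (T^[n] y)) atTop (𝓝 0) }

/-- A Cantor set: a nonempty compact perfect totally disconnected set. -/
def IsCantorSet [TopologicalSpace X] (C : Set X) : Prop :=
  C.Nonempty ∧ IsCompact C ∧ Perfect C ∧ IsTotallyDisconnected C

/-- A weakly mixing set for `T`. -/
def IsWeaklyMixingSet [TopologicalSpace X] (T : X → X) (A : Set X) : Prop :=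
  A.Nonempty ∧ IsClosed A ∧
  ∃ B : Set X, B ⊆ A ∧
    (∃ C : ℕ → Set X, (∀ n, IsCantorSet (C n)) ∧ B = ⋃ n, C n) ∧
    closure B = A ∧
    ∀ C : Set X, C ⊆ B → IsCantorSet C →
      ∀ g : C → X, Continuous g → (∀ c : C, g c ∈ A) →
        ∃ φ : ℕ → ℕ, StrictMono φ ∧
          ∀ c : C, Tendsto (fun i => T^[φ i] (c : X)) atTop (𝓝 (g c))

/-!
Pulling a cover back along `φ = Tᵐ` keeps it Borel and refining, and since `φ` commutes with
`T` and is onto, `exp (f∘φ)_n` takes on `φ⁻¹(V ∩ K)` exactly the values `exp f_n` takes on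
`V ∩ K`; this gives `≤`. For `≥` a cover `𝒱` refining `(φ⁻¹𝒰)_0^{n-1}` has to be pushed
forward, but the images `φ(V)` need not be Borel. Each `V` lies in `φ⁻¹ A_V` for an atom `A_V`
of `𝒰_0^{n-1}`, and it suffices to replace `φ(V)` by the Borel set of points of `A_V` that lie
outside `K` or where `exp f_n` is at most the supremum attached to `V`.
-/

section Pullback

variable {Y : Type*} {T φ : X → X} {f : X → ℝ} {n : ℕ}

theorem birk_comp_of_commute (hφT : Function.Commute φ T) (f : X → ℝ) (n : ℕ) (x : X) :
    birk T (fun y => f (φ y)) n x = birk T f n (φ x) :=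
  Finset.sum_congr rfl fun j _ => congrArg f ((hφT.iterate_right j).eq x)

theorem image_exp_birk_comp_preimage (hφT : Function.Commute φ T)
    (hφs : Function.Surjective φ) (f : X → ℝ) (n : ℕ) (S : Set X) :
    (fun x => Real.exp (birk T (fun y => f (φ y)) n x)) '' (φ ⁻¹' S) =
      (fun x => Real.exp (birk T f n x)) '' S := by
  simp only [birk_comp_of_commute hφT]
  exact (Set.image_comp (fun x => Real.exp (birk T f n x)) φ _).trans
    (congrArg _ (Set.image_preimage_eq S hφs))

theorem continuous_birk [TopologicalSpace X] (hT : Continuous T) (hf : Continuous f) (n : ℕ) :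
    Continuous (birk T f n) :=
  continuous_finsetSum _ fun j _ => hf.comp (hT.iterate j)

theorem bddAbove_image_exp_birk [TopologicalSpace X] (hT : Continuous T) (hf : Continuous f)
    {K : Set X} (hK : IsCompact K) : BddAbove ((fun x => Real.exp (birk T f n x)) '' K) :=
  (hK.image (Real.continuous_exp.comp (continuous_birk hT hf n))).bddAbove

theorem sSup_image_exp_nonneg (g : X → ℝ) (S : Set X) :
    0 ≤ sSup ((fun x => Real.exp (g x)) '' S) :=
  Real.sSup_nonneg (Set.forall_mem_image.2 fun _ _ => (Real.exp_pos _).le)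

theorem sUnion_image_preimage [DecidableEq (Set X)] (φ : X → Y) (𝒱 : Finset (Set Y)) :
    ⋃₀ ((𝒱.image (φ ⁻¹' ·) : Finset (Set X)) : Set (Set X)) = φ ⁻¹' ⋃₀ (𝒱 : Set (Set Y)) := by
  simp [Set.preimage_sUnion]

theorem IsOpenCover.image_preimage [TopologicalSpace X] [TopologicalSpace Y]
    [DecidableEq (Set X)] {φ : X → Y} (hφ : Continuous φ) {𝒰 : Finset (Set Y)}
    (h𝒰 : IsOpenCover 𝒰) : IsOpenCover (𝒰.image (φ ⁻¹' ·)) := by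
  refine ⟨?_, by rw [sUnion_image_preimage, h𝒰.2, Set.preimage_univ]⟩
  simp only [Finset.mem_image]
  rintro _ ⟨U, hU, rfl⟩
  exact (h𝒰.1 U hU).preimage hφ

theorem IsBorelCover.image_preimage [MeasurableSpace X] [MeasurableSpace Y]
    [DecidableEq (Set X)] {φ : X → Y} (hφ : Measurable φ) {𝒱 : Finset (Set Y)}
    (h𝒱 : IsBorelCover 𝒱) : IsBorelCover (𝒱.image (φ ⁻¹' ·)) := by
  refine ⟨?_, by rw [sUnion_image_preimage, h𝒱.2, Set.preimage_univ]⟩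
  simp only [Finset.mem_image]
  rintro _ ⟨V, hV, rfl⟩
  exact (h𝒱.1 V hV).preimage hφ

theorem RefinesIter.image_preimage [DecidableEq (Set X)] (hφT : Function.Commute φ T)
    {𝒰 𝒱 : Finset (Set X)} (h : RefinesIter T 𝒰 n 𝒱) :
    RefinesIter T (𝒰.image (φ ⁻¹' ·)) n (𝒱.image (φ ⁻¹' ·)) := by
  simp only [RefinesIter, Finset.mem_image]
  rintro _ ⟨V, hV, rfl⟩
  obtain ⟨A, hA, hVA⟩ := h V hV
  refine ⟨fun i => φ ⁻¹' A i, fun i => ⟨A i, hA i, rfl⟩,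
    fun x hx => Set.mem_iInter.mpr fun i => ?_⟩
  show φ (T^[i] x) ∈ A i
  rw [(hφT.iterate_right i).eq]
  exact Set.mem_iInter.mp (hVA hx) i

theorem RefinesIter.exists_subset_preimage [DecidableEq (Set X)] (hφT : Function.Commute φ T)
    {𝒰 𝒱 : Finset (Set X)} (h : RefinesIter T (𝒰.image (φ ⁻¹' ·)) n 𝒱) {V : Set X}
    (hV : V ∈ 𝒱) :
    ∃ A : Fin n → Set X, (∀ i, A i ∈ 𝒰) ∧ V ⊆ φ ⁻¹' ⋂ i : Fin n, T^[(i : ℕ)] ⁻¹' A i := by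
  obtain ⟨B, hB, hVB⟩ := h V hV
  choose A hA hAB using fun i => Finset.mem_image.mp (hB i)
  refine ⟨A, hA, fun x hx => Set.mem_iInter.mpr fun i => ?_⟩
  have hxB : T^[i] x ∈ φ ⁻¹' A i := (hAB i).symm ▸ Set.mem_iInter.mp (hVB hx) i
  rwa [Set.mem_preimage, (hφT.iterate_right i).eq] at hxB

end Pullback

section Pressure

variable [MeasurableSpace X] {T φ : X → X} {f : X → ℝ} {𝒰 : Finset (Set X)} {n : ℕ}
  {K : Set X}

theorem measurableSet_iInter_preimage_iterate [TopologicalSpace X] [OpensMeasurableSpace X]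
    (hT : Continuous T) (h𝒰 : IsOpenCover 𝒰) {A : Fin n → Set X} (hA : ∀ i, A i ∈ 𝒰) :
    MeasurableSet (⋂ i : Fin n, T^[(i : ℕ)] ⁻¹' A i) :=
  MeasurableSet.iInter fun i => ((h𝒰.1 _ (hA i)).preimage (hT.iterate _)).measurableSet

theorem exists_isBorelCover_refinesIter [TopologicalSpace X] [OpensMeasurableSpace X]
    (hT : Continuous T) (h𝒰 : IsOpenCover 𝒰) (n : ℕ) :
    ∃ 𝒱 : Finset (Set X), IsBorelCover 𝒱 ∧ RefinesIter T 𝒰 n 𝒱 := by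
  classical
  let atom : (Fin n → 𝒰) → Set X := fun A => ⋂ i : Fin n, T^[(i : ℕ)] ⁻¹' (A i : Set X)
  refine ⟨Finset.univ.image atom, ⟨?_, ?_⟩, ?_⟩
  · simp only [Finset.mem_image]
    rintro _ ⟨A, -, rfl⟩
    exact measurableSet_iInter_preimage_iterate hT h𝒰 fun i => (A i).2
  · refine Set.eq_univ_of_forall fun x => ?_
    have hcov : ∀ i : Fin n, ∃ U : 𝒰, T^[(i : ℕ)] x ∈ (U : Set X) := fun i => by
      obtain ⟨U, hU, hxU⟩ := Set.mem_sUnion.mp (h𝒰.2.symm ▸ Set.mem_univ (T^[(i : ℕ)] x))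
      exact ⟨⟨U, hU⟩, hxU⟩
    choose A hA using hcov
    exact Set.mem_sUnion.mpr ⟨atom A, by simp, Set.mem_iInter.mpr hA⟩
  · simp only [RefinesIter, Finset.mem_image]
    rintro _ ⟨A, -, rfl⟩
    exact ⟨fun i => A i, fun i => (A i).2, subset_rfl⟩

theorem covPn_le_sum {𝒱 : Finset (Set X)} (h𝒱 : IsBorelCover 𝒱) (href : RefinesIter T 𝒰 n 𝒱) :
    covPn T f 𝒰 n K ≤ ∑ V ∈ 𝒱, sSup ((fun x => Real.exp (birk T f n x)) '' (V ∩ K)) :=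
  csInf_le ⟨0, by
      rintro _ ⟨𝒲, -, -, rfl⟩
      exact Finset.sum_nonneg fun _ _ => sSup_image_exp_nonneg _ _⟩
    ⟨𝒱, h𝒱, href, rfl⟩

theorem le_covPn [TopologicalSpace X] [OpensMeasurableSpace X] (hT : Continuous T)
    (h𝒰 : IsOpenCover 𝒰) {c : ℝ}
    (h : ∀ 𝒱 : Finset (Set X), IsBorelCover 𝒱 → RefinesIter T 𝒰 n 𝒱 →
      c ≤ ∑ V ∈ 𝒱, sSup ((fun x => Real.exp (birk T f n x)) '' (V ∩ K))) :
    c ≤ covPn T f 𝒰 n K := by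
  obtain ⟨𝒱, h𝒱, href⟩ := exists_isBorelCover_refinesIter hT h𝒰 n
  refine le_csInf ⟨_, 𝒱, h𝒱, href, rfl⟩ ?_
  rintro _ ⟨𝒱, h𝒱, href, rfl⟩
  exact h 𝒱 h𝒱 href

theorem covPn_le_of_covering [TopologicalSpace X] [OpensMeasurableSpace X] (hT : Continuous T)
    (hf : Continuous f) (h𝒰 : IsOpenCover 𝒰) (hK : MeasurableSet K) {ι : Type*} [Fintype ι]
    (A : ι → Fin n → Set X) (hA : ∀ j i, A j i ∈ 𝒰) (c : ι → ℝ) (hc : ∀ j, 0 ≤ c j)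
    (hcover : ∀ x, ∃ j, x ∈ ⋂ i : Fin n, T^[(i : ℕ)] ⁻¹' A j i ∧
      (x ∈ K → Real.exp (birk T f n x) ≤ c j)) :
    covPn T f 𝒰 n K ≤ ∑ j, c j := by
  classical
  let W : ι → Set X := fun j =>
    (⋂ i : Fin n, T^[(i : ℕ)] ⁻¹' A j i) ∩ ({x | Real.exp (birk T f n x) ≤ c j} ∪ Kᶜ)
  have hW : IsBorelCover (Finset.univ.image W) := by
    refine ⟨?_, Set.eq_univ_of_forall fun x => ?_⟩
    · simp only [Finset.mem_image]
      rintro _ ⟨j, -, rfl⟩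
      refine (measurableSet_iInter_preimage_iterate hT h𝒰 (hA j)).inter
        (MeasurableSet.union ?_ hK.compl)
      exact (isClosed_le (Real.continuous_exp.comp (continuous_birk hT hf n))
        continuous_const).measurableSet
    · obtain ⟨j, hxA, hxc⟩ := hcover x
      exact Set.mem_sUnion.mpr ⟨W j, by simp, hxA, (em (x ∈ K)).imp hxc id⟩
  have hWref : RefinesIter T 𝒰 n (Finset.univ.image W) := by
    simp only [RefinesIter, Finset.mem_image]
    rintro _ ⟨j, -, rfl⟩
    exact ⟨A j, hA j, Set.inter_subset_left⟩
  calc covPn T f 𝒰 n K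
      ≤ ∑ V ∈ Finset.univ.image W, sSup ((fun x => Real.exp (birk T f n x)) '' (V ∩ K)) :=
        covPn_le_sum hW hWref
    _ ≤ ∑ j, sSup ((fun x => Real.exp (birk T f n x)) '' (W j ∩ K)) :=
        Finset.sum_image_le_of_nonneg fun _ _ => sSup_image_exp_nonneg _ _
    _ ≤ ∑ j, c j := by
        refine Finset.sum_le_sum fun j _ => Real.sSup_le ?_ (hc j)
        rintro _ ⟨x, ⟨⟨-, hx⟩, hxK⟩, rfl⟩
        exact hx.resolve_right (not_not_intro hxK)

end Pressure

section PressurePullback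

variable [TopologicalSpace X] [MeasurableSpace X] [BorelSpace X] [DecidableEq (Set X)]
  {T φ : X → X} {f : X → ℝ} {𝒰 : Finset (Set X)} {n : ℕ} {K : Set X}

theorem covPn_comp_le (hT : Continuous T) (hφ : Continuous φ) (hφT : Function.Commute φ T)
    (hφs : Function.Surjective φ) (h𝒰 : IsOpenCover 𝒰) :
    covPn T (fun x => f (φ x)) (𝒰.image (φ ⁻¹' ·)) n (φ ⁻¹' K) ≤ covPn T f 𝒰 n K := by
  refine le_covPn hT h𝒰 fun 𝒱 h𝒱 href => ?_
  calc _ ≤ ∑ V ∈ 𝒱.image (φ ⁻¹' ·),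
        sSup ((fun x => Real.exp (birk T (fun y => f (φ y)) n x)) '' (V ∩ φ ⁻¹' K)) :=
        covPn_le_sum (h𝒱.image_preimage hφ.measurable) (href.image_preimage hφT)
    _ = _ := by
        rw [Finset.sum_image fun _ _ _ _ h => hφs.preimage_injective h]
        simp only [← Set.preimage_inter, image_exp_birk_comp_preimage hφT hφs]

theorem covPn_le_comp [T2Space X] (hT : Continuous T) (hf : Continuous f) (hφ : Continuous φ)
    (hφT : Function.Commute φ T) (hφs : Function.Surjective φ) (h𝒰 : IsOpenCover 𝒰)
    (hK : IsCompact K) :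
    covPn T f 𝒰 n K ≤ covPn T (fun x => f (φ x)) (𝒰.image (φ ⁻¹' ·)) n (φ ⁻¹' K) := by
  refine le_covPn hT (h𝒰.image_preimage hφ) fun 𝒱 h𝒱 href => ?_
  choose A hA hVA using fun V : 𝒱 => href.exists_subset_preimage hφT V.2
  let c : Set X → ℝ := fun V =>
    sSup ((fun x => Real.exp (birk T (fun y => f (φ y)) n x)) '' (V ∩ φ ⁻¹' K))
  have hbdd (V : Set X) :
      BddAbove ((fun x => Real.exp (birk T (fun y => f (φ y)) n x)) '' (V ∩ φ ⁻¹' K)) := by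
    refine (bddAbove_image_exp_birk (n := n) hT hf hK).mono ?_
    rw [← image_exp_birk_comp_preimage hφT hφs f n K]
    exact Set.image_mono Set.inter_subset_right
  rw [← Finset.sum_coe_sort 𝒱]
  refine covPn_le_of_covering hT hf h𝒰 hK.measurableSet A hA (fun V => c V)
    (fun _ => sSup_image_exp_nonneg _ _) fun x => ?_
  obtain ⟨y, rfl⟩ := hφs x
  obtain ⟨V, hV, hyV⟩ := Set.mem_sUnion.mp (h𝒱.2.symm ▸ Set.mem_univ y)
  refine ⟨⟨V, hV⟩, hVA _ hyV, fun hyK => ?_⟩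
  rw [← birk_comp_of_commute hφT]
  exact le_csSup (hbdd V) ⟨y, ⟨hyV, hyK⟩, rfl⟩

theorem covPn_comp_eq [T2Space X] (hT : Continuous T) (hf : Continuous f) (hφ : Continuous φ)
    (hφT : Function.Commute φ T) (hφs : Function.Surjective φ) (h𝒰 : IsOpenCover 𝒰)
    (hK : IsCompact K) :
    covPn T (fun x => f (φ x)) (𝒰.image (φ ⁻¹' ·)) n (φ ⁻¹' K) = covPn T f 𝒰 n K :=
  (covPn_comp_le hT hφ hφT hφs h𝒰).antisymm (covPn_le_comp hT hf hφ hφT hφs h𝒰 hK)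

end PressurePullback

theorem stmt16_general [MetricSpace X] [MeasurableSpace X] [BorelSpace X]
    (T : X → X) (hT : Continuous T) (hTs : Function.Surjective T) (f : C(X, ℝ))
    (𝒰 : Finset (Set X)) (h𝒰 : IsOpenCover 𝒰) (K : Set X) (hK : IsCompact K)
    (n m : ℕ) :
    covPn T (fun x => f (T^[m] x))
        (@Finset.image _ _ (Classical.decEq _) (fun U => T^[m] ⁻¹' U) 𝒰) n
        (T^[m] ⁻¹' K) =
      covPn T ⇑f 𝒰 n K := by
  classical
  exact covPn_comp_eq hT f.continuous (hT.iterate m) (Function.Commute.iterate_self T m)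
    (hTs.iterate m) h𝒰 hK

/-- For a surjective continuous `T` on a compact metric space,
`f ∈ C(X,ℝ)`, a finite open cover `𝒰` and a compact `K ⊆ X`:
`P_n(T, f∘Tᵐ, T^{-m}𝒰, T^{-m}K) = P_n(T,f,𝒰,K)`. -/
theorem stmt16 [MetricSpace X] [CompactSpace X] [MeasurableSpace X] [BorelSpace X]
    (T : X → X) (hT : Continuous T) (hTs : Function.Surjective T) (f : C(X, ℝ))
    (𝒰 : Finset (Set X)) (h𝒰 : IsOpenCover 𝒰) (K : Set X) (hK : IsCompact K)
    (n m : ℕ) :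
    covPn T (fun x => f (T^[m] x))
        (@Finset.image _ _ (Classical.decEq _) (fun U => T^[m] ⁻¹' U) 𝒰) n
        (T^[m] ⁻¹' K) =
      covPn T ⇑f 𝒰 n K :=
  stmt16_general T hT hTs f 𝒰 h𝒰 K hK n m
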